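/- Let σ be a 0-1 squashing function and K ⊆ ℝⁿ compact. Then N₄, the class of three-hidden-layer neural networks with activation σ (affine output), is dense in C(K) with respect to the sup norm: for every continuous T : K → ℝ and every ε > 0 there exists f ∈ N₄ with sup_{x ∈ K} |f(x) - T(x)| < ε. -/
import Mathlib


open Filter Topology

/-- A 0-1 squashing function: increasing, continuous, with limit 0 at -∞ and 1 at +∞. -/
def IsSquashing (σ : ℝ → ℝ) : Prop :=
  Monotone σ ∧ Continuous σ ∧
    Tendsto σ atBot (nhds 0) ∧ Tendsto σ atTop (nhds 1)

/-- `Net σ n k f` means `f ∈ 𝒩_k`: `𝒩₁` is the affine functions on `ℝⁿ`, and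
`𝒩_{k+1}` consists of affine combinations `a₀ + Σⱼ aⱼ σ(Fⱼ)` with `Fⱼ ∈ 𝒩_k`
(so the summands `σ ∘ Fⱼ` range over `𝒩_k^σ`). -/
inductive Net (σ : ℝ → ℝ) (n : ℕ) : ℕ → ((Fin n → ℝ) → ℝ) → Prop
  | affine (a₀ : ℝ) (a : Fin n → ℝ) : Net σ n 1 (fun x => a₀ + ∑ i, a i * x i)
  | comb (k m : ℕ) (F : Fin m → ((Fin n → ℝ) → ℝ)) (a₀ : ℝ) (a : Fin m → ℝ)
      (hF : ∀ j, Net σ n k (F j)) :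
      Net σ n (k + 1) (fun x => a₀ + ∑ j, a j * σ (F j x))


lemma net_const (σ : ℝ → ℝ) (n k : ℕ) (c : ℝ) : Net σ n (k + 1) (fun _ => c) := by
  have h := Net.comb (σ := σ) (n := n) k 0 (fun _ => fun _ => 0) c (fun _ => 0)
    (fun j => j.elim0)
  simpa using h

lemma net_continuous {σ : ℝ → ℝ} {n : ℕ} (hσ : Continuous σ) {k : ℕ}
    {f : (Fin n → ℝ) → ℝ} (h : Net σ n k f) : Continuous f := by
  induction h with
  | affine a₀ a =>
      exact continuous_const.add (continuous_finset_sum _ fun i _ =>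
        continuous_const.mul (continuous_apply i))
  | comb k m F a₀ a hF ih =>
      exact continuous_const.add (continuous_finset_sum _ fun j _ =>
        continuous_const.mul (hσ.comp (ih j)))

lemma net_add {σ : ℝ → ℝ} {n k : ℕ} {f g : (Fin n → ℝ) → ℝ}
    (hf : Net σ n (k + 2) f) (hg : Net σ n (k + 2) g) :
    Net σ n (k + 2) (fun x => f x + g x) := by
  cases hf with
  | comb _ m₁ F a₀ a hF =>
    cases hg with
    | comb _ m₂ G b₀ b hG =>
      have h := Net.comb (σ := σ) (n := n) (k + 1) (m₁ + m₂) (Fin.append F G) (a₀ + b₀)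
        (Fin.append a b) (fun j => by
          refine Fin.addCases (fun i => ?_) (fun i => ?_) j
          · rw [Fin.append_left]; exact hF i
          · rw [Fin.append_right]; exact hG i)
      have e : (fun x => (a₀ + b₀) + ∑ j : Fin (m₁ + m₂),
            Fin.append a b j * σ (Fin.append F G j x))
          = fun x => (a₀ + ∑ j, a j * σ (F j x)) + (b₀ + ∑ j, b j * σ (G j x)) := by
        funext x
        rw [Fin.sum_univ_add]
        simp only [Fin.append_left, Fin.append_right]
        ring
      rwa [e] at h

lemma net_smul {σ : ℝ → ℝ} {n k : ℕ} {f : (Fin n → ℝ) → ℝ} (c : ℝ)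
    (hf : Net σ n (k + 2) f) : Net σ n (k + 2) (fun x => c * f x) := by
  cases hf with
  | comb _ m F a₀ a hF =>
    have h := Net.comb (σ := σ) (n := n) (k + 1) m F (c * a₀) (fun j => c * a j) hF
    have e : (fun x => (c * a₀) + ∑ j, (c * a j) * σ (F j x))
        = fun x => c * (a₀ + ∑ j, a j * σ (F j x)) := by
      funext x
      rw [mul_add, Finset.mul_sum]
      ring_nf
    rwa [e] at h


set_option maxHeartbeats 1000000 in
/-- One-dimensional universal approximation by a single hidden layer. -/
lemma oneD {σ : ℝ → ℝ} (mono : Monotone σ) (hbot : Tendsto σ atBot (nhds 0))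
    (htop : Tendsto σ atTop (nhds 1))
    (φ : ℝ → ℝ) (hφ : Continuous φ) (a b : ℝ) (hab : a < b) (ε : ℝ) (hε : 0 < ε) :
    ∃ (m : ℕ) (c₀ : ℝ) (w v u : Fin m → ℝ),
      ∀ t ∈ Set.Icc a b, |c₀ + ∑ j, w j * σ (v j * t + u j) - φ t| < ε := by
  have hσ0 : ∀ x, 0 ≤ σ x := fun x =>
    le_of_tendsto hbot ((eventually_le_atBot x).mono fun y hy => mono hy)
  have hσ1 : ∀ x, σ x ≤ 1 := fun x =>
    ge_of_tendsto htop ((eventually_ge_atTop x).mono fun y hy => mono hy)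
  -- uniform continuity of φ on [a,b]
  have huc : UniformContinuousOn φ (Set.Icc a b) :=
    isCompact_Icc.uniformContinuousOn_of_continuous hφ.continuousOn
  rw [Metric.uniformContinuousOn_iff] at huc
  obtain ⟨δ, hδ, hucδ⟩ := huc (ε / 4) (by positivity)
  -- choose number of pieces
  obtain ⟨m₀, hm₀⟩ := exists_nat_gt ((b - a) / δ)
  set m : ℕ := m₀ + 1 with hm
  have hmpos : 0 < (m : ℝ) := by positivity
  have hmgt : (b - a) / δ < (m : ℝ) := lt_of_lt_of_le hm₀ (by exact_mod_cast Nat.le_succ m₀)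
  set Δ : ℝ := (b - a) / m with hΔdef
  have hΔpos : 0 < Δ := div_pos (by linarith) hmpos
  have hΔδ : Δ < δ := by
    have h1 : (b - a) / δ + 1 ≤ (m : ℝ) := by
      rw [hm]; push_cast; linarith
    have h2 : (b - a) / δ * δ = b - a := div_mul_cancel₀ _ (ne_of_gt hδ)
    rw [hΔdef, div_lt_iff₀ hmpos]
    nlinarith
  -- grid points
  set tt : ℕ → ℝ := fun i => a + i * Δ with htt
  have htt_mem : ∀ i : ℕ, i ≤ m → tt i ∈ Set.Icc a b := by
    intro i hi
    constructor
    · have : 0 ≤ (i : ℝ) * Δ := mul_nonneg (by positivity) hΔpos.le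
      simp only [htt]; linarith
    · have h1 : (i : ℝ) * Δ ≤ (m : ℝ) * Δ := by
        have : (i : ℝ) ≤ m := by exact_mod_cast hi
        nlinarith
      have h2 : (m : ℝ) * Δ = b - a := by
        rw [hΔdef]; field_simp
      simp only [htt]; linarith
  -- jump sizes
  set c : Fin m → ℝ := fun i => φ (tt (i + 1)) - φ (tt i) with hc
  have hc_small : ∀ i : Fin m, |c i| < ε / 4 := by
    intro i
    have h1 : tt (i + 1) ∈ Set.Icc a b := htt_mem _ (by omega)
    have h2 : tt (i : ℕ) ∈ Set.Icc a b := htt_mem _ (le_of_lt (by omega))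
    have hd : dist (tt ((i : ℕ) + 1)) (tt (i : ℕ)) < δ := by
      rw [Real.dist_eq]
      have : tt ((i : ℕ) + 1) - tt (i : ℕ) = Δ := by
        simp only [htt]; push_cast; ring
      rw [this, abs_of_pos hΔpos]; exact hΔδ
    simpa [hc, Real.dist_eq] using hucδ _ h1 _ h2 hd
  -- choose the slope r
  have hβ : (0 : ℝ) < 1 / m := by positivity
  obtain ⟨R₁, hR₁⟩ := (eventually_atTop.mp
    (htop.eventually (eventually_gt_nhds (show 1 - 1/(m:ℝ) < 1 by linarith))))
  obtain ⟨R₂, hR₂⟩ := (eventually_atBot.mp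
    (hbot.eventually (eventually_lt_nhds hβ)))
  set R : ℝ := max R₁ (max (-R₂) 1) with hR
  have hRpos : (0 : ℝ) < R := lt_of_lt_of_le one_pos (le_trans (le_max_right _ _) (le_max_right _ _))
  have hRR₁ : R₁ ≤ R := le_max_left _ _
  have hRR₂ : -R ≤ R₂ := by
    have : -R₂ ≤ R := le_trans (le_max_left _ _) (le_max_right _ _)
    linarith
  set r : ℝ := 2 * R / Δ with hr
  have hrpos : 0 < r := by positivity
  have hrΔ : r * (Δ / 2) = R := by rw [hr]; field_simp
  -- the approximating net
  refine ⟨m, φ a, c, fun _ => r, fun i => -(r * (a + ((i : ℕ) + 1/2) * Δ)), ?_⟩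
  intro t ht
  set k : ℕ := min m₀ ⌊(t - a) / Δ⌋₊ with hk
  have hk_lt : k < m := lt_of_le_of_lt (min_le_left _ _) (by omega)
  have hk_le : (k : ℝ) * Δ ≤ t - a := by
    have h1 : (k : ℝ) ≤ (t - a) / Δ := by
      have := Nat.floor_le (show (0 : ℝ) ≤ (t - a) / Δ by
        apply div_nonneg _ hΔpos.le; linarith [ht.1])
      have h2 : (k : ℝ) ≤ (⌊(t - a) / Δ⌋₊ : ℝ) := by
        exact_mod_cast min_le_right m₀ _
      linarith
    calc (k : ℝ) * Δ ≤ ((t - a) / Δ) * Δ := by nlinarith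
      _ = t - a := div_mul_cancel₀ _ (ne_of_gt hΔpos)
  have hk_ge : t - a ≤ ((k : ℝ) + 1) * Δ := by
    by_cases hcase : ⌊(t - a) / Δ⌋₊ ≤ m₀
    · have hkeq : k = ⌊(t - a) / Δ⌋₊ := min_eq_right hcase
      have := Nat.lt_floor_add_one ((t - a) / Δ)
      rw [← hkeq] at this
      have h2 : (t - a) / Δ < (k : ℝ) + 1 := by exact_mod_cast this
      calc t - a = ((t - a) / Δ) * Δ := (div_mul_cancel₀ _ (ne_of_gt hΔpos)).symm
        _ ≤ ((k : ℝ) + 1) * Δ := by nlinarith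
    · have hkeq : k = m₀ := min_eq_left (le_of_not_ge hcase)
      have h2 : ((k : ℝ) + 1) = (m : ℝ) := by rw [hkeq, hm]; push_cast; ring
      rw [h2]
      have : (m : ℝ) * Δ = b - a := by rw [hΔdef]; field_simp
      linarith [ht.2, this]
  -- indicator values
  set e : Fin m → ℝ := fun i => if (i : ℕ) < k then 1 else 0 with he
  -- telescoping sum
  have S1 : ∑ i, c i * e i = φ (tt k) - φ a := by
    have h0 : ∑ i, c i * e i
        = ∑ i ∈ Finset.range m, (if i < k then φ (tt (i + 1)) - φ (tt i) else 0) := by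
      rw [← Fin.sum_univ_eq_sum_range (fun i => (if i < k then φ (tt (i+1)) - φ (tt i) else 0)) m]
      apply Finset.sum_congr rfl
      intro i _
      by_cases hik : (i : ℕ) < k <;> simp [hc, he, hik]
    rw [h0, Finset.range_eq_Ico, ← Finset.sum_Ico_consecutive _ (Nat.zero_le k) (le_of_lt hk_lt)]
    have hA : ∑ i ∈ Finset.Ico 0 k, (if i < k then φ (tt (i + 1)) - φ (tt i) else 0)
        = φ (tt k) - φ (tt 0) := by
      rw [← Finset.range_eq_Ico]
      rw [show (∑ i ∈ Finset.range k, (if i < k then φ (tt (i + 1)) - φ (tt i) else 0))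
          = ∑ i ∈ Finset.range k, (φ (tt (i + 1)) - φ (tt i)) from
        Finset.sum_congr rfl (fun i hi => by simp [Finset.mem_range.mp hi])]
      exact Finset.sum_range_sub (fun i => φ (tt i)) k
    have hB : ∑ i ∈ Finset.Ico k m, (if i < k then φ (tt (i + 1)) - φ (tt i) else 0) = 0 :=
      Finset.sum_eq_zero (fun i hi => by
        have := (Finset.mem_Ico.mp hi).1; simp [Nat.not_lt.mpr this])
    rw [hA, hB]
    simp [htt]
  -- per-index bound on |σ - indicator|
  have hbnd : ∀ i : Fin m, |σ (r * (t - (a + ((i : ℕ) + 1/2) * Δ))) - e i|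
      ≤ (if (i : ℕ) = k then 1 else 0) + 1/m := by
    intro i
    set si : ℝ := a + ((i : ℕ) + 1/2) * Δ with hsi
    rcases lt_trichotomy (i : ℕ) k with hik | hik | hik
    · have hei : e i = 1 := by simp [he, hik]
      have h1 : ((i : ℕ) : ℝ) + 1 ≤ (k : ℝ) := by exact_mod_cast hik
      have hts : Δ / 2 ≤ t - si := by
        have h2 : (((i : ℕ) : ℝ) + 1) * Δ ≤ (k : ℝ) * Δ :=
          mul_le_mul_of_nonneg_right h1 hΔpos.le
        simp only [hsi]
        nlinarith [hk_le]
      have hσge : 1 - 1/(m : ℝ) < σ (r * (t - si)) := by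
        apply hR₁
        calc R₁ ≤ R := hRR₁
          _ = r * (Δ/2) := hrΔ.symm
          _ ≤ r * (t - si) := mul_le_mul_of_nonneg_left hts hrpos.le
      have h01 : σ (r * (t - si)) ≤ 1 := hσ1 _
      rw [hei, abs_of_nonpos (by linarith)]
      have hne : ¬((i : ℕ) = k) := Nat.ne_of_lt hik
      rw [if_neg hne]
      linarith
    · rw [show e i = 0 by simp [he, hik], sub_zero, abs_of_nonneg (hσ0 _), if_pos hik]
      have := hσ1 (r * (t - si))
      have : (0:ℝ) ≤ 1/m := le_of_lt hβ
      linarith [hσ1 (r * (t - si))]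
    · have hei : e i = 0 := by
        simp [he, Nat.not_lt.mpr (le_of_lt hik)]
      have h1 : (k : ℝ) + 1 ≤ ((i : ℕ) : ℝ) := by exact_mod_cast hik
      have hts : t - si ≤ -(Δ / 2) := by
        have h2 : ((k : ℝ) + 1) * Δ ≤ (((i : ℕ) : ℝ)) * Δ :=
          mul_le_mul_of_nonneg_right h1 hΔpos.le
        simp only [hsi]
        nlinarith [hk_ge]
      have hσle : σ (r * (t - si)) < 1/(m : ℝ) := by
        apply hR₂
        have hle : r * (t - si) ≤ r * (-(Δ/2)) := mul_le_mul_of_nonneg_left hts hrpos.le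
        rw [mul_neg] at hle
        rw [hrΔ] at hle
        linarith
      rw [hei, sub_zero, abs_of_nonneg (hσ0 _), if_neg (Nat.ne_of_gt hik)]
      linarith
  -- main estimate
  show |φ a + ∑ j : Fin m, c j * σ (r * t + -(r * (a + ((j : ℕ) + 1/2) * Δ))) - φ t| < ε
  have hsum_eq : ∑ j : Fin m, c j * σ (r * t + -(r * (a + ((j : ℕ) + 1/2) * Δ)))
      = ∑ j : Fin m, c j * σ (r * (t - (a + ((j : ℕ) + 1/2) * Δ))) :=
    Finset.sum_congr rfl (fun j _ => by
      rw [show r * t + -(r * (a + ((j : ℕ) + 1/2) * Δ))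
          = r * (t - (a + ((j : ℕ) + 1/2) * Δ)) from by ring])
  have main_eq : φ a + ∑ j : Fin m, c j * σ (r * (t - (a + ((j : ℕ) + 1/2) * Δ))) - φ t
      = (φ (tt k) - φ t) + ∑ j : Fin m, c j * (σ (r * (t - (a + ((j : ℕ) + 1/2) * Δ))) - e j) := by
    simp only [mul_sub]
    rw [Finset.sum_sub_distrib, S1]
    ring
  rw [hsum_eq, main_eq]
  have h_t1 : |φ (tt k) - φ t| < ε/4 := by
    have hd : dist (tt k) t < δ := by
      rw [Real.dist_eq]
      have habs : |tt k - t| ≤ Δ := by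
        rw [abs_le]
        constructor
        · simp only [htt]; linarith
        · simp only [htt]; linarith
      exact lt_of_le_of_lt habs hΔδ
    have := hucδ _ (htt_mem k (le_of_lt hk_lt)) _ ht hd
    rwa [Real.dist_eq] at this
  have h_t2 : |∑ j : Fin m, c j * (σ (r * (t - (a + ((j : ℕ) + 1/2) * Δ))) - e j)| ≤ ε/2 := by
    set kf : Fin m := ⟨k, hk_lt⟩ with hkf
    calc |∑ j : Fin m, c j * (σ (r * (t - (a + ((j : ℕ) + 1/2) * Δ))) - e j)|
        ≤ ∑ j : Fin m, |c j * (σ (r * (t - (a + ((j : ℕ) + 1/2) * Δ))) - e j)| :=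
          Finset.abs_sum_le_sum_abs _ _
      _ = ∑ j : Fin m, |c j| * |σ (r * (t - (a + ((j : ℕ) + 1/2) * Δ))) - e j| := by
          simp [abs_mul]
      _ ≤ ∑ j : Fin m, (ε/4) * ((if (j : ℕ) = k then 1 else 0) + 1/m) :=
          Finset.sum_le_sum (fun j _ => mul_le_mul (le_of_lt (hc_small j)) (hbnd j)
            (abs_nonneg _) (by positivity))
      _ = (ε/4) * ((∑ j : Fin m, (if (j : ℕ) = k then (1:ℝ) else 0)) + ∑ _j : Fin m, 1/(m:ℝ)) := by
          rw [← Finset.mul_sum, Finset.sum_add_distrib]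
      _ = ε/2 := by
          have hs1 : (∑ j : Fin m, (if (j : ℕ) = k then (1:ℝ) else 0)) = 1 := by
            have : ∀ j : Fin m, ((j : ℕ) = k) = (j = kf) := fun j => by
              rw [eq_iff_iff, Fin.ext_iff]
            simp only [this]
            simp
          have hs2 : (∑ _j : Fin m, 1/(m:ℝ)) = 1 := by
            rw [Finset.sum_const, Finset.card_univ, Fintype.card_fin, nsmul_eq_mul]
            field_simp
          rw [hs1, hs2]; ring
  calc |(φ (tt k) - φ t) + ∑ j : Fin m, c j * (σ (r * (t - (a + ((j : ℕ) + 1/2) * Δ))) - e j)|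
      ≤ |φ (tt k) - φ t| + |∑ j : Fin m, c j * (σ (r * (t - (a + ((j : ℕ) + 1/2) * Δ))) - e j)| :=
        abs_add_le _ _
    _ < ε := by linarith


/-- An affine function on `ℝⁿ`. -/
def aff {n : ℕ} (a₀ : ℝ) (a : Fin n → ℝ) : (Fin n → ℝ) → ℝ := fun x => a₀ + ∑ i, a i * x i

lemma aff_continuous {n : ℕ} (a₀ : ℝ) (a : Fin n → ℝ) : Continuous (aff a₀ a) :=
  continuous_const.add (continuous_finset_sum _ fun i _ =>
    continuous_const.mul (continuous_apply i))

lemma aff_add {n : ℕ} (a₀ b₀ : ℝ) (a b : Fin n → ℝ) (x : Fin n → ℝ) :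
    aff (a₀ + b₀) (a + b) x = aff a₀ a x + aff b₀ b x := by
  simp only [aff, Pi.add_apply, add_mul, Finset.sum_add_distrib]; ring

lemma aff_sub {n : ℕ} (a₀ b₀ : ℝ) (a b : Fin n → ℝ) (x : Fin n → ℝ) :
    aff (a₀ - b₀) (a - b) x = aff a₀ a x - aff b₀ b x := by
  simp only [aff, Pi.sub_apply, sub_mul, Finset.sum_sub_distrib]; ring

/-- Restriction of `cos ∘ (affine)` to `K` as a continuous map. -/
noncomputable def cosC {n : ℕ} (K : Set (Fin n → ℝ)) (a₀ : ℝ) (a : Fin n → ℝ) : C(K, ℝ) :=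
  ⟨fun z => Real.cos (aff a₀ a z),
    Real.continuous_cos.comp ((aff_continuous a₀ a).comp continuous_subtype_val)⟩

noncomputable def sinC {n : ℕ} (K : Set (Fin n → ℝ)) (a₀ : ℝ) (a : Fin n → ℝ) : C(K, ℝ) :=
  ⟨fun z => Real.sin (aff a₀ a z),
    Real.continuous_sin.comp ((aff_continuous a₀ a).comp continuous_subtype_val)⟩

/-- Sines and cosines of affine functions. -/
def trigSet {n : ℕ} (K : Set (Fin n → ℝ)) : Set C(K, ℝ) :=
  {f | ∃ a₀ a, f = cosC K a₀ a ∨ f = sinC K a₀ a}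

lemma trig_mul_mem {n : ℕ} (K : Set (Fin n → ℝ)) :
    ∀ f ∈ trigSet K, ∀ g ∈ trigSet K, f * g ∈ Submodule.span ℝ (trigSet K) := by
  intro f hf g hg
  obtain ⟨a₀, a, hf⟩ := hf
  obtain ⟨b₀, b, hg⟩ := hg
  have hmemc : ∀ c₀ c, cosC K c₀ c ∈ Submodule.span ℝ (trigSet K) :=
    fun c₀ c => Submodule.subset_span ⟨c₀, c, Or.inl rfl⟩
  have hmems : ∀ c₀ c, sinC K c₀ c ∈ Submodule.span ℝ (trigSet K) :=
    fun c₀ c => Submodule.subset_span ⟨c₀, c, Or.inr rfl⟩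
  rcases hf with hf | hf <;> rcases hg with hg | hg <;> subst hf hg
  · have : cosC K a₀ a * cosC K b₀ b
        = (1/2 : ℝ) • cosC K (a₀ - b₀) (a - b) + (1/2 : ℝ) • cosC K (a₀ + b₀) (a + b) := by
      ext z
      simp only [ContinuousMap.mul_apply, ContinuousMap.add_apply, ContinuousMap.smul_apply,
        cosC, ContinuousMap.coe_mk, smul_eq_mul, aff_add, aff_sub]
      rw [Real.cos_sub, Real.cos_add]; ring
    rw [this]
    exact Submodule.add_mem _ (Submodule.smul_mem _ _ (hmemc _ _))
      (Submodule.smul_mem _ _ (hmemc _ _))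
  · have : cosC K a₀ a * sinC K b₀ b
        = (1/2 : ℝ) • sinC K (a₀ + b₀) (a + b) - (1/2 : ℝ) • sinC K (a₀ - b₀) (a - b) := by
      ext z
      simp only [ContinuousMap.mul_apply, ContinuousMap.sub_apply, ContinuousMap.smul_apply,
        cosC, sinC, ContinuousMap.coe_mk, smul_eq_mul, aff_add, aff_sub]
      rw [Real.sin_sub, Real.sin_add]; ring
    rw [this]
    exact Submodule.sub_mem _ (Submodule.smul_mem _ _ (hmems _ _))
      (Submodule.smul_mem _ _ (hmems _ _))
  · have : sinC K a₀ a * cosC K b₀ b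
        = (1/2 : ℝ) • sinC K (a₀ + b₀) (a + b) + (1/2 : ℝ) • sinC K (a₀ - b₀) (a - b) := by
      ext z
      simp only [ContinuousMap.mul_apply, ContinuousMap.add_apply, ContinuousMap.smul_apply,
        cosC, sinC, ContinuousMap.coe_mk, smul_eq_mul, aff_add, aff_sub]
      rw [Real.sin_sub, Real.sin_add]; ring
    rw [this]
    exact Submodule.add_mem _ (Submodule.smul_mem _ _ (hmems _ _))
      (Submodule.smul_mem _ _ (hmems _ _))
  · have : sinC K a₀ a * sinC K b₀ b
        = (1/2 : ℝ) • cosC K (a₀ - b₀) (a - b) - (1/2 : ℝ) • cosC K (a₀ + b₀) (a + b) := by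
      ext z
      simp only [ContinuousMap.mul_apply, ContinuousMap.sub_apply, ContinuousMap.smul_apply,
        cosC, sinC, ContinuousMap.coe_mk, smul_eq_mul, aff_add, aff_sub]
      rw [Real.cos_sub, Real.cos_add]; ring
    rw [this]
    exact Submodule.sub_mem _ (Submodule.smul_mem _ _ (hmemc _ _))
      (Submodule.smul_mem _ _ (hmemc _ _))

lemma trig_one_mem {n : ℕ} (K : Set (Fin n → ℝ)) :
    (1 : C(K, ℝ)) ∈ Submodule.span ℝ (trigSet K) := by
  have : (1 : C(K, ℝ)) = cosC K 0 0 := by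
    ext z
    simp [cosC, aff]
  rw [this]
  exact Submodule.subset_span ⟨0, 0, Or.inl rfl⟩

/-- The span of the trig set, as a subalgebra. -/
noncomputable def trigAlg {n : ℕ} (K : Set (Fin n → ℝ)) : Subalgebra ℝ C(K, ℝ) :=
  Submodule.toSubalgebra (Submodule.span ℝ (trigSet K)) (trig_one_mem K)
    (fun x y hx hy => by
      have h1 : x * y ∈ Submodule.span ℝ (trigSet K) * Submodule.span ℝ (trigSet K) :=
        Submodule.mul_mem_mul hx hy
      rw [Submodule.span_mul_span] at h1
      refine Submodule.span_le.mpr ?_ h1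
      rw [Set.mul_subset_iff]
      exact fun f hf g hg => trig_mul_mem K f hf g hg)

lemma trigAlg_separates {n : ℕ} (K : Set (Fin n → ℝ)) : (trigAlg K).SeparatesPoints := by
  intro x y hxy
  have hne : (x : Fin n → ℝ) ≠ (y : Fin n → ℝ) := fun h => hxy (Subtype.ext h)
  obtain ⟨i, hi⟩ := Function.ne_iff.mp hne
  set d : ℝ := (x : Fin n → ℝ) i - (y : Fin n → ℝ) i with hd
  have hdne : d ≠ 0 := sub_ne_zero.mpr hi
  set c : ℝ := Real.pi / d with hc
  set av : Fin n → ℝ := fun j => if j = i then c else 0 with hav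
  have haff : ∀ z : K, aff 0 av (z : Fin n → ℝ) = c * (z : Fin n → ℝ) i := by
    intro z
    simp only [aff, hav, zero_add, ite_mul, zero_mul]
    rw [Finset.sum_ite_eq' Finset.univ i (fun j => c * (z : Fin n → ℝ) j)]
    simp
  by_cases hcos : Real.cos (c * (x : Fin n → ℝ) i) ≠ Real.cos (c * (y : Fin n → ℝ) i)
  · refine ⟨_, ⟨cosC K 0 av, Submodule.subset_span ⟨0, av, Or.inl rfl⟩, rfl⟩, ?_⟩
    simpa [cosC, haff] using hcos
  · push_neg at hcos
    refine ⟨_, ⟨sinC K 0 av, Submodule.subset_span ⟨0, av, Or.inr rfl⟩, rfl⟩, ?_⟩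
    simp only [sinC, ContinuousMap.coe_mk, haff]
    intro hsin
    have hone : Real.cos (c * (x : Fin n → ℝ) i - c * (y : Fin n → ℝ) i) = 1 := by
      rw [Real.cos_sub, hcos, hsin]
      have := Real.sin_sq_add_cos_sq (c * (y : Fin n → ℝ) i)
      nlinarith [this]
    have hpi : c * (x : Fin n → ℝ) i - c * (y : Fin n → ℝ) i = Real.pi := by
      rw [hc]
      field_simp
      ring
    rw [hpi, Real.cos_pi] at hone
    norm_num at hone


section E

lemma gen_apx {σ : ℝ → ℝ} (mono : Monotone σ) (hbot : Tendsto σ atBot (nhds 0))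
    (htop : Tendsto σ atTop (nhds 1)) {n : ℕ} {K : Set (Fin n → ℝ)}
    (hK : IsCompact K) (φ : ℝ → ℝ) (hφ : Continuous φ) (a₀ : ℝ) (a : Fin n → ℝ)
    (ε : ℝ) (hε : 0 < ε) :
    ∃ f, Net σ n 2 f ∧ ∀ x ∈ K, |f x - φ (aff a₀ a x)| < ε := by
  obtain ⟨C, hC⟩ := hK.exists_bound_of_continuousOn (aff_continuous a₀ a).continuousOn
  set M : ℝ := max C 0 + 1 with hM
  have hMpos : 0 < M := by
    have : (0:ℝ) ≤ max C 0 := le_max_right _ _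
    linarith
  obtain ⟨m, c₀, w, v, u, hnet⟩ := oneD mono hbot htop φ hφ (-M) M (by linarith) ε hε
  set F : Fin m → (Fin n → ℝ) → ℝ :=
    fun j => fun x => (v j * a₀ + u j) + ∑ i, (v j * a i) * x i with hF
  refine ⟨fun x => c₀ + ∑ j, w j * σ (F j x),
    Net.comb 1 m F c₀ w (fun j => Net.affine _ _), ?_⟩
  intro x hx
  have hmem : aff a₀ a x ∈ Set.Icc (-M) M := by
    have h1 : |aff a₀ a x| ≤ C := by
      have := hC x hx
      rwa [Real.norm_eq_abs] at this
    rw [abs_le] at h1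
    have h2 : C ≤ max C 0 := le_max_left _ _
    exact ⟨by linarith [h1.1], by linarith [h1.2]⟩
  have heq : ∀ j, F j x = v j * aff a₀ a x + u j := by
    intro j
    simp only [hF, aff, mul_add, Finset.mul_sum, mul_assoc]
    ring
  show |c₀ + ∑ j, w j * σ (F j x) - φ (aff a₀ a x)| < ε
  rw [show (∑ j, w j * σ (F j x)) = ∑ j, w j * σ (v j * aff a₀ a x + u j) from
    Finset.sum_congr rfl (fun j _ => by rw [heq j])]
  exact hnet (aff a₀ a x) hmem

lemma dense2 {σ : ℝ → ℝ} (hσ : IsSquashing σ) {n : ℕ} {K : Set (Fin n → ℝ)}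
    (hK : IsCompact K) (T : (Fin n → ℝ) → ℝ) (hT : ContinuousOn T K)
    (ε : ℝ) (hε : 0 < ε) :
    ∃ f, Net σ n 2 f ∧ ∀ x ∈ K, |f x - T x| < ε := by
  obtain ⟨mono, cont, hbot, htop⟩ := hσ
  haveI : CompactSpace K := isCompact_iff_compactSpace.mp hK
  obtain ⟨⟨p, hpA⟩, hp⟩ :=
    ContinuousMap.exists_mem_subalgebra_near_continuous_of_separatesPoints
      (trigAlg K) (trigAlg_separates K) (K.restrict T) hT.restrict (ε/2) (by positivity)
  have hpV : p ∈ Submodule.span ℝ (trigSet K) := hpA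
  have hApx : ∀ q : C(K, ℝ), q ∈ Submodule.span ℝ (trigSet K) →
      ∀ ε' > 0, ∃ f, Net σ n 2 f ∧ ∀ x, ∀ hx : x ∈ K, |f x - q ⟨x, hx⟩| < ε' := by
    intro q hq
    induction hq using Submodule.span_induction with
    | mem q hq =>
        intro ε' hε'
        obtain ⟨a₀, a, hqe⟩ := hq
        rcases hqe with h | h <;> subst h
        · obtain ⟨f, hf1, hf2⟩ := gen_apx mono hbot htop hK Real.cos
            Real.continuous_cos a₀ a ε' hε'
          exact ⟨f, hf1, fun x hx => by simpa [cosC] using hf2 x hx⟩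
        · obtain ⟨f, hf1, hf2⟩ := gen_apx mono hbot htop hK Real.sin
            Real.continuous_sin a₀ a ε' hε'
          exact ⟨f, hf1, fun x hx => by simpa [sinC] using hf2 x hx⟩
    | zero =>
        intro ε' hε'
        exact ⟨fun _ => 0, net_const σ n 1 0, fun x hx => by simpa using hε'⟩
    | add q r hq hr ihq ihr =>
        intro ε' hε'
        obtain ⟨f, hf1, hf2⟩ := ihq (ε'/2) (by positivity)
        obtain ⟨g, hg1, hg2⟩ := ihr (ε'/2) (by positivity)
        refine ⟨fun x => f x + g x, net_add hf1 hg1, fun x hx => ?_⟩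
        simp only [ContinuousMap.add_apply]
        have he : f x + g x - (q ⟨x, hx⟩ + r ⟨x, hx⟩)
            = (f x - q ⟨x, hx⟩) + (g x - r ⟨x, hx⟩) := by ring
        rw [he]
        calc |(f x - q ⟨x, hx⟩) + (g x - r ⟨x, hx⟩)|
            ≤ |f x - q ⟨x, hx⟩| + |g x - r ⟨x, hx⟩| := abs_add_le _ _
          _ < ε' := by linarith [hf2 x hx, hg2 x hx]
    | smul cc q hq ihq =>
        intro ε' hε'
        have h2 : 0 < ε' / (|cc| + 1) := by positivity
        obtain ⟨f, hf1, hf2⟩ := ihq (ε' / (|cc| + 1)) h2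
        refine ⟨fun x => cc * f x, net_smul cc hf1, fun x hx => ?_⟩
        simp only [ContinuousMap.smul_apply, smul_eq_mul]
        rw [show cc * f x - cc * q ⟨x, hx⟩ = cc * (f x - q ⟨x, hx⟩) from by ring, abs_mul]
        calc |cc| * |f x - q ⟨x, hx⟩| ≤ |cc| * (ε' / (|cc| + 1)) :=
              mul_le_mul_of_nonneg_left (le_of_lt (hf2 x hx)) (abs_nonneg _)
          _ < (|cc| + 1) * (ε' / (|cc| + 1)) :=
              mul_lt_mul_of_pos_right (by linarith [abs_nonneg cc]) h2
          _ = ε' := by field_simp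
  obtain ⟨f, hf1, hf2⟩ := hApx p hpV (ε/2) (by positivity)
  refine ⟨f, hf1, fun x hx => ?_⟩
  have h1 := hp ⟨x, hx⟩
  rw [Real.norm_eq_abs] at h1
  have h2 := hf2 x hx
  have he : f x - T x = (f x - p ⟨x, hx⟩) + (p ⟨x, hx⟩ - T x) := by ring
  rw [he]
  calc |(f x - p ⟨x, hx⟩) + (p ⟨x, hx⟩ - T x)|
      ≤ |f x - p ⟨x, hx⟩| + |p ⟨x, hx⟩ - T x| := abs_add_le _ _
    _ < ε := by
        have : |p ⟨x, hx⟩ - T x| < ε / 2 := by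
          simpa [Set.restrict] using h1
        linarith

lemma net_lift {σ : ℝ → ℝ} (mono : Monotone σ) (cont : Continuous σ)
    {n : ℕ} {K : Set (Fin n → ℝ)} (hK : IsCompact K)
    {j m : ℕ} (F : Fin m → (Fin n → ℝ) → ℝ) (hF : ∀ i, Net σ n j (F i))
    (a₀ : ℝ) (a : Fin m → ℝ) (k : ℕ)
    (hdense : ∀ G : (Fin n → ℝ) → ℝ, Continuous G → ∀ δ > 0,
      ∃ H, Net σ n k H ∧ ∀ x ∈ K, |H x - G x| < δ)
    (ε : ℝ) (hε : 0 < ε) :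
    ∃ f, Net σ n (k + 1) f ∧
      ∀ x ∈ K, |f x - (a₀ + ∑ i, a i * σ (F i x))| < ε := by
  set A : ℝ := ∑ i, |a i| with hA
  have hA0 : 0 ≤ A := Finset.sum_nonneg fun i _ => abs_nonneg _
  set ε' : ℝ := ε / (A + 1) with hε'
  have hε'0 : 0 < ε' := by positivity
  -- uniform bound on the F i over K
  choose C hC using fun i =>
    hK.exists_bound_of_continuousOn ((net_continuous cont (hF i)).continuousOn)
  set M : ℝ := (∑ i, |C i|) + 1 with hM
  have hFM : ∀ i, ∀ x ∈ K, |F i x| ≤ M - 1 := by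
    intro i x hx
    have h1 : ‖F i x‖ ≤ C i := hC i x hx
    have h2 : C i ≤ |C i| := le_abs_self _
    have h3 : |C i| ≤ ∑ i', |C i'| :=
      Finset.single_le_sum (fun i' _ => abs_nonneg (C i')) (Finset.mem_univ i)
    rw [Real.norm_eq_abs] at h1
    simp only [hM]
    linarith
  have hM1 : 1 ≤ M := by
    have : 0 ≤ ∑ i, |C i| := Finset.sum_nonneg fun i _ => abs_nonneg _
    simp only [hM]; linarith
  -- uniform continuity of σ on a compact interval
  have huc : UniformContinuousOn σ (Set.Icc (-(M+1)) (M+1)) :=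
    isCompact_Icc.uniformContinuousOn_of_continuous cont.continuousOn
  rw [Metric.uniformContinuousOn_iff] at huc
  obtain ⟨δ, hδ0, hδ⟩ := huc ε' hε'0
  set δ' : ℝ := min δ 1 with hδ'
  have hδ'0 : 0 < δ' := lt_min hδ0 one_pos
  choose H hHnet hHapx using fun i =>
    hdense (F i) (net_continuous cont (hF i)) δ' hδ'0
  refine ⟨fun x => a₀ + ∑ i, a i * σ (H i x), Net.comb k m H a₀ a hHnet, ?_⟩
  intro x hx
  have hterm : ∀ i : Fin m, |σ (H i x) - σ (F i x)| ≤ ε' := by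
    intro i
    have hFmem : F i x ∈ Set.Icc (-(M+1)) (M+1) := by
      have := hFM i x hx
      rw [abs_le] at this
      exact ⟨by linarith [this.1], by linarith [this.2]⟩
    have hHF : |H i x - F i x| < δ' := hHapx i x hx
    have hHmem : H i x ∈ Set.Icc (-(M+1)) (M+1) := by
      have h1 := hFM i x hx
      rw [abs_le] at h1
      have h2 : |H i x - F i x| ≤ 1 := le_of_lt (lt_of_lt_of_le hHF (min_le_right _ _))
      rw [abs_le] at h2
      exact ⟨by linarith [h1.1, h2.1], by linarith [h1.2, h2.2]⟩
    have hd : dist (H i x) (F i x) < δ :=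
      lt_of_lt_of_le (by rwa [Real.dist_eq]) (min_le_left _ _)
    have := hδ _ hHmem _ hFmem hd
    rw [Real.dist_eq] at this
    exact le_of_lt this
  have he : (a₀ + ∑ i, a i * σ (H i x)) - (a₀ + ∑ i, a i * σ (F i x))
      = ∑ i, a i * (σ (H i x) - σ (F i x)) := by
    simp only [mul_sub]
    rw [Finset.sum_sub_distrib]
    ring
  rw [he]
  calc |∑ i, a i * (σ (H i x) - σ (F i x))|
      ≤ ∑ i, |a i * (σ (H i x) - σ (F i x))| := Finset.abs_sum_le_sum_abs _ _
    _ = ∑ i, |a i| * |σ (H i x) - σ (F i x)| := by simp [abs_mul]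
    _ ≤ ∑ i, |a i| * ε' := Finset.sum_le_sum fun i _ =>
        mul_le_mul_of_nonneg_left (hterm i) (abs_nonneg _)
    _ = A * ε' := by rw [← Finset.sum_mul]
    _ < ε := by
        rw [hε']
        have h1 : A * (ε / (A + 1)) < (A + 1) * (ε / (A + 1)) :=
          mul_lt_mul_of_pos_right (by linarith) (by positivity)
        have h2 : (A + 1) * (ε / (A + 1)) = ε := by field_simp
        linarith

theorem stmt10 (σ : ℝ → ℝ) (hσ : IsSquashing σ)
    (n : ℕ) (K : Set (Fin n → ℝ)) (hK : IsCompact K)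
    (T : (Fin n → ℝ) → ℝ) (hT : ContinuousOn T K) (ε : ℝ) (hε : 0 < ε) :
    ∃ f : (Fin n → ℝ) → ℝ, Net σ n 4 f ∧ ∀ x ∈ K, |f x - T x| < ε := by
  obtain ⟨mono, cont, hbot, htop⟩ := hσ
  have hσ' : IsSquashing σ := ⟨mono, cont, hbot, htop⟩
  -- density of one-hidden-layer nets, in convenient form
  have D2 : ∀ G : (Fin n → ℝ) → ℝ, Continuous G → ∀ δ > 0,
      ∃ H, Net σ n 2 H ∧ ∀ x ∈ K, |H x - G x| < δ :=
    fun G hG δ hδ => dense2 hσ' hK G hG.continuousOn δ hδ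
  -- density of two-hidden-layer nets
  have D3 : ∀ G : (Fin n → ℝ) → ℝ, Continuous G → ∀ δ > 0,
      ∃ H, Net σ n 3 H ∧ ∀ x ∈ K, |H x - G x| < δ := by
    intro G hG δ hδ
    obtain ⟨g, hg, hgapx⟩ := D2 G hG (δ/2) (by positivity)
    cases hg with
    | comb k m F a₀ a hF =>
      obtain ⟨f, hf, hfapx⟩ := net_lift mono cont hK F hF a₀ a 2 D2 (δ/2) (by positivity)
      refine ⟨f, hf, fun x hx => ?_⟩
      calc |f x - G x|
          = |(f x - (a₀ + ∑ i, a i * σ (F i x))) + ((a₀ + ∑ i, a i * σ (F i x)) - G x)| := by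
            ring_nf
        _ ≤ |f x - (a₀ + ∑ i, a i * σ (F i x))| + |(a₀ + ∑ i, a i * σ (F i x)) - G x| :=
            abs_add_le _ _
        _ < δ := by linarith [hfapx x hx, hgapx x hx]
  -- density of three-hidden-layer nets
  obtain ⟨g, hg, hgapx⟩ := dense2 hσ' hK T hT (ε/2) (by positivity)
  cases hg with
  | comb k m F a₀ a hF =>
    obtain ⟨f, hf, hfapx⟩ := net_lift mono cont hK F hF a₀ a 3 D3 (ε/2) (by positivity)
    refine ⟨f, hf, fun x hx => ?_⟩
    calc |f x - T x|
        = |(f x - (a₀ + ∑ i, a i * σ (F i x))) + ((a₀ + ∑ i, a i * σ (F i x)) - T x)| := by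
          ring_nf
      _ ≤ |f x - (a₀ + ∑ i, a i * σ (F i x))| + |(a₀ + ∑ i, a i * σ (F i x)) - T x| :=
          abs_add_le _ _
      _ < ε := by linarith [hfapx x hx, hgapx x hx]

end E
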